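/- arXiv:2111.02631 — 2 statements merged into one kernel-verified Lean document; each statement's English description precedes it below -/
import Mathlib

section
/- For the sequence ℓ_s = ℓ_1^{α^{s-1}} with α ≥ 2 and 0 < ℓ_1 ≤ 1/3, and h_s = ℓ_s - 2ℓ_{s+1}, the inequality ∑_{k=0}^{n} 1/(2^k h_k) ≤ 2/(2^n h_n) holds for all n ≥ 4. -/
/-!
For `s ≥ 1` we have `ℓ_{s+1} = ℓ_s ^ α ≤ ℓ_s ^ 2`, so `ℓ_s ≤ 1/3` decays at least
quadratically and `ℓ_s / 3 ≤ h_s ≤ ℓ_s`. Once `ℓ_s ≤ 1/6` this gives `4 h_{s+1} ≤ h_s`, i.e. the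
terms `a_k = 1 / (2^k h_k)` at least double from `k = 2` on, and then `∑_{k ≤ n} a_k ≤ 2 a_n`
follows by induction as soon as `∑_{k < N} a_k ≤ a_N`. This fails for `N = 3` but holds for
`N = 4`: with `c = ℓ_3 ≤ 1/81` the first four terms are at most `3 + 21 / (8c)`, while
`a_4 ≥ 1 / (16 c²)`.
-/

theorem Finset.sum_range_succ_le_two_mul_of_two_mul_le {a : ℕ → ℝ} {N : ℕ}
    (hbase : ∑ k ∈ Finset.range N, a k ≤ a N) (hdouble : ∀ m, N ≤ m → 2 * a m ≤ a (m + 1))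
    (n : ℕ) (hn : N ≤ n) : ∑ k ∈ Finset.range (n + 1), a k ≤ 2 * a n := by
  induction n, hn using Nat.le_induction with
  | base => rw [Finset.sum_range_succ]; linarith
  | succ m hm ih => rw [Finset.sum_range_succ]; linarith [hdouble m hm]

theorem two_mul_one_div_le_one_div_of_four_mul_le {x y : ℝ} (hy : 0 < y) (hyx : 4 * y ≤ x)
    (m : ℕ) : 2 * (1 / (2 ^ m * x)) ≤ 1 / (2 ^ (m + 1) * y) := by
  have h2m : (0 : ℝ) < 2 ^ m := by positivity
  rw [mul_one_div, div_le_div_iff₀ (by nlinarith) (by positivity), pow_succ]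
  nlinarith

theorem Real.rpow_pow_succ_le_sq {x α : ℝ} (hx : 0 < x) (hx1 : x ≤ 1) (hα : 2 ≤ α) (k : ℕ) :
    x ^ (α ^ (k + 1)) ≤ (x ^ (α ^ k)) ^ 2 := by
  have hxk : x ^ (α ^ k) ≤ 1 := Real.rpow_le_one hx.le hx1 (by positivity)
  calc x ^ (α ^ (k + 1)) = (x ^ (α ^ k)) ^ α := by rw [pow_succ, Real.rpow_mul hx.le]
    _ ≤ (x ^ (α ^ k)) ^ (2 : ℝ) :=
      Real.rpow_le_rpow_of_exponent_ge (by positivity) hxk hα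
    _ = (x ^ (α ^ k)) ^ 2 := Real.rpow_two _

def gap (ℓ : ℕ → ℝ) (s : ℕ) : ℝ := ℓ s - 2 * ℓ (s + 1)

/-- `ℓ_{s+1} = ℓ_s ^ α` (`s ≥ 1`, `α ≥ 2`) weakened to `ℓ_{s+1} ≤ ℓ_s ^ 2`. -/
structure QuadraticDecay (ℓ : ℕ → ℝ) : Prop where
  pos : ∀ s, 0 < ℓ (s + 1)
  le_sq : ∀ s, ℓ (s + 2) ≤ ℓ (s + 1) ^ 2
  first_le_one_third : ℓ 1 ≤ 1 / 3

namespace QuadraticDecay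

variable {ℓ : ℕ → ℝ}

theorem le_one_third (hℓ : QuadraticDecay ℓ) (s : ℕ) : ℓ (s + 1) ≤ 1 / 3 := by
  induction s with
  | zero => exact hℓ.first_le_one_third
  | succ s ih => nlinarith [hℓ.le_sq s, hℓ.pos s]

theorem le_one_ninth (hℓ : QuadraticDecay ℓ) (s : ℕ) : ℓ (s + 2) ≤ 1 / 9 := by
  nlinarith [hℓ.le_sq s, hℓ.pos s, hℓ.le_one_third s]

theorem succ_le (hℓ : QuadraticDecay ℓ) (s : ℕ) : ℓ (s + 2) ≤ ℓ (s + 1) := by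
  nlinarith [hℓ.le_sq s, hℓ.pos s, hℓ.le_one_third s]

theorem third_le_gap (hℓ : QuadraticDecay ℓ) (s : ℕ) : ℓ (s + 1) / 3 ≤ gap ℓ (s + 1) := by
  unfold gap
  nlinarith [hℓ.le_sq s, hℓ.pos s, hℓ.le_one_third s]

theorem gap_le (hℓ : QuadraticDecay ℓ) (s : ℕ) : gap ℓ (s + 1) ≤ ℓ (s + 1) := by
  unfold gap
  linarith [hℓ.pos (s + 1)]

theorem four_mul_gap_succ_le (hℓ : QuadraticDecay ℓ) (s : ℕ) :
    4 * gap ℓ (s + 3) ≤ gap ℓ (s + 2) := by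
  unfold gap
  nlinarith [hℓ.le_sq (s + 1), hℓ.pos (s + 1), hℓ.pos (s + 3), hℓ.le_one_ninth s]

theorem two_mul_one_div_le (hℓ : QuadraticDecay ℓ) (m : ℕ) :
    2 * (1 / (2 ^ (m + 2) * gap ℓ (m + 2))) ≤ 1 / (2 ^ (m + 3) * gap ℓ (m + 3)) :=
  two_mul_one_div_le_one_div_of_four_mul_le
    (by linarith [hℓ.third_le_gap (m + 2), hℓ.pos (m + 2)]) (hℓ.four_mul_gap_succ_le m) _

theorem one_div_le_of_le (hℓ : QuadraticDecay ℓ) {c : ℝ} (hc : 0 < c) {s : ℕ}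
    (hcs : c ≤ ℓ (s + 1)) : 1 / (2 ^ (s + 1) * gap ℓ (s + 1)) ≤ 3 / (2 ^ (s + 1) * c) := by
  have hgap := hℓ.third_le_gap s
  have hgap_pos : 0 < gap ℓ (s + 1) := by linarith
  rw [div_le_div_iff₀ (by positivity) (by positivity)]
  nlinarith [pow_pos (two_pos : (0 : ℝ) < 2) (s + 1)]

theorem sum_range_four_le (hℓ : QuadraticDecay ℓ) (h0 : ℓ 0 = 1) :
    ∑ k ∈ Finset.range 4, 1 / (2 ^ k * gap ℓ k) ≤ 1 / (2 ^ 4 * gap ℓ 4) := by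
  set c := ℓ 3
  have hc : 0 < c := hℓ.pos 2
  have hc81 : c ≤ 1 / 81 := by nlinarith [hℓ.le_sq 1, hℓ.le_one_ninth 0, hℓ.pos 1]
  have hc2 : c ≤ ℓ 2 := hℓ.succ_le 1
  have hc1 : c ≤ ℓ 1 := hc2.trans (hℓ.succ_le 0)
  have hgap0 : 1 / (2 ^ 0 * gap ℓ 0) ≤ 3 := by
    have : 1 / 3 ≤ gap ℓ 0 := by unfold gap; linarith [hℓ.first_le_one_third]
    rw [pow_zero, one_mul, div_le_iff₀ (by linarith)]
    linarith
  have hgap4 : 1 / (2 ^ 4 * c ^ 2) ≤ 1 / (2 ^ 4 * gap ℓ 4) :=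
    one_div_le_one_div_of_le (by linarith [hℓ.third_le_gap 3, hℓ.pos 3])
      (by linarith [hℓ.gap_le 3, hℓ.le_sq 2])
  have hc_ineq :
      3 + 3 / (2 ^ 1 * c) + 3 / (2 ^ 2 * c) + 3 / (2 ^ 3 * c) ≤ 1 / (2 ^ 4 * c ^ 2) := by
    rw [le_div_iff₀ (by positivity)]
    field_simp
    nlinarith
  simp only [Finset.sum_range_succ, Finset.sum_range_zero, zero_add]
  linarith [hℓ.one_div_le_of_le hc hc1, hℓ.one_div_le_of_le hc hc2,
    hℓ.one_div_le_of_le (s := 2) hc le_rfl]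

end QuadraticDecay

theorem stmt_3 (α l1 : ℝ) (hα : 2 ≤ α) (hl1 : 0 < l1) (hl1' : l1 ≤ 1/3)
    (ℓ h : ℕ → ℝ) (hℓ0 : ℓ 0 = 1)
    (hℓ : ∀ s : ℕ, 1 ≤ s → ℓ s = l1 ^ (α ^ (s - 1)))
    (hh : ∀ s : ℕ, h s = ℓ s - 2 * ℓ (s + 1)) (n : ℕ) (hn : 4 ≤ n) :
    ∑ k ∈ Finset.range (n + 1), 1 / (2 ^ k * h k) ≤ 2 / (2 ^ n * h n) := by
  have hℓ' (s : ℕ) : ℓ (s + 1) = l1 ^ (α ^ s) := hℓ (s + 1) (by omega)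
  have hpos (s : ℕ) : 0 < ℓ (s + 1) := hℓ' s ▸ Real.rpow_pos_of_pos hl1 _
  have hsq (s : ℕ) : ℓ (s + 2) ≤ ℓ (s + 1) ^ 2 := by
    rw [hℓ' (s + 1), hℓ' s]; exact Real.rpow_pow_succ_le_sq hl1 (by linarith) hα s
  have h1 : ℓ 1 ≤ 1 / 3 := by simpa [hℓ' 0] using hl1'
  have hdecay : QuadraticDecay ℓ := ⟨hpos, hsq, h1⟩
  obtain rfl : h = gap ℓ := funext hh
  rw [← mul_one_div]
  refine Finset.sum_range_succ_le_two_mul_of_two_mul_le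
    (hdecay.sum_range_four_le hℓ0) (fun m hm => ?_) n hn
  obtain ⟨m, rfl⟩ := Nat.exists_eq_add_of_le' (show 2 ≤ m by omega)
  exact hdecay.two_mul_one_div_le m
end

section
/- For every 0 < β ≤ 1/3, the Lebesgue constants for interpolation at the endpoint sets Y_{s-1} of the Cantor set K_β tend to infinity: Λ_{2^s}(Y_{s-1}, K_β) → ∞ as s → ∞. In fact Λ_{2^s}(Y_{s-1}, K_β) ≥ β^s / (1 - β^2)^{2^{s-1}}, which tends to infinity. -/
/-!
Write `s = m + 2`, take the node `z = β (1 - β^m)` of `Y_{m+1}` and the point `x = β^{m+2} ∈ K_β`.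
The nodes split as `β Y_m ∪ (1 - β + β Y_m)`. Every node `y` of the right half is far from both
`x` and `z`, and `|x - y| / |z - y| ≥ 1 / (1 - β²)`; there are `2^{m+1}` of them. Scaling by `β`
turns the left half into `Y_m` with node `1 - β^m` and point `β^{m+1}`. There the nodes other than
`0, β^m, 1` pair up as `y ↔ 1 - y`, each pair contributing a factor `≥ 1`, and the three remaining
factors give at least `β^{m+2}`. Since `2^{s-1}` eventually exceeds `s²`, the resulting bound
`β^s / (1 - β²)^{2^{s-1}}` tends to infinity.
-/

open Finset Filter

theorem image_range_two_pow_succ {α : Type*} [DecidableEq α] (φ : ℕ → α) (m : ℕ) :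
    (range (2 ^ (m + 1))).image φ =
      (range (2 ^ m)).image φ ∪ (range (2 ^ m)).image (fun j => φ (2 ^ m + j)) := by
  rw [pow_succ, mul_two, range_add, image_union, map_eq_image, image_image]
  rfl

theorem one_le_prod_of_involution {ι R : Type*} [CommSemiring R] [LinearOrder R]
    [IsStrictOrderedRing R] {s : Finset ι} {f : ι → R} (σ : ι → ι)
    (hσ : ∀ i ∈ s, σ i ∈ s) (hσσ : ∀ i ∈ s, σ (σ i) = i) (hf : ∀ i ∈ s, 0 ≤ f i)
    (h : ∀ i ∈ s, 1 ≤ f i * f (σ i)) : 1 ≤ ∏ i ∈ s, f i := by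
  have hperm : ∏ i ∈ s, f (σ i) = ∏ i ∈ s, f i :=
    prod_nbij' σ σ hσ hσ hσσ hσσ fun _ _ => rfl
  rw [← one_le_pow_iff_of_nonneg (prod_nonneg hf) two_ne_zero, sq]
  nth_rw 2 [← hperm]
  rw [← prod_mul_distrib]
  exact one_le_prod h

theorem prod_erase_image_mul_abs_div {K : Type*} [Field K] [LinearOrder K]
    [IsStrictOrderedRing K] {c : K} (hc : c ≠ 0) (s : Finset K) (x z : K) :
    ∏ y ∈ (s.image (c * ·)).erase (c * z), |c * x - y| / |c * z - y| =
      ∏ y ∈ s.erase z, |x - y| / |z - y| := by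
  have hinj : Function.Injective (c * ·) := mul_right_injective₀ hc
  rw [← image_erase hinj, prod_image fun _ _ _ _ h => hinj h]
  refine prod_congr rfl fun y _ => ?_
  rw [← mul_sub, ← mul_sub, abs_mul, abs_mul, mul_div_mul_left _ _ (abs_ne_zero.2 hc)]

theorem prod_abs_div_le_sSup {N : Finset ℝ} {K : Set ℝ} (hK : Bornology.IsBounded K) {x z : ℝ}
    (hx : x ∈ K) (hz : z ∈ N) :
    ∏ y ∈ N.erase z, |x - y| / |z - y| ≤
      sSup {t : ℝ | ∃ x ∈ K, t = ∑ z ∈ N, |∏ y ∈ N.erase z, ((x - y) / (z - y))|} := by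
  set F : ℝ → ℝ := fun x => ∑ z ∈ N, |∏ y ∈ N.erase z, ((x - y) / (z - y))|
  have hF : Continuous F := by fun_prop
  have hbdd : BddAbove {t | ∃ x ∈ K, t = F x} :=
    (hK.isCompact_closure.bddAbove_image hF.continuousOn).mono
      (by rintro _ ⟨x, hx, rfl⟩; exact ⟨x, subset_closure hx, rfl⟩)
  calc ∏ y ∈ N.erase z, |x - y| / |z - y| = |∏ y ∈ N.erase z, (x - y) / (z - y)| := by
        simp only [abs_prod, abs_div]
    _ ≤ F x := single_le_sum (f := fun z => |∏ y ∈ N.erase z, (x - y) / (z - y)|)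
        (fun _ _ => abs_nonneg _) hz
    _ ≤ _ := le_csSup hbdd ⟨x, hx, rfl⟩

theorem mul_self_le_two_pow_pred {s : ℕ} (hs : 7 ≤ s) : s * s ≤ 2 ^ (s - 1) := by
  induction s, hs using Nat.le_induction with
  | base => norm_num
  | succ n hn ih =>
    have h : 2 ^ n = 2 * 2 ^ (n - 1) := by
      rw [← pow_succ']
      congr 1
      omega
    rw [Nat.add_sub_cancel, h]
    nlinarith

theorem tendsto_pow_div_pow_two_pow {β r : ℝ} (hβ : 0 < β) (hr₀ : 0 < r) (hr₁ : r < 1) :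
    Tendsto (fun s : ℕ => β ^ s / r ^ 2 ^ (s - 1)) atTop atTop := by
  set q := r⁻¹
  have hq : 1 < q := (one_lt_inv₀ hr₀).2 hr₁
  have hlin : Tendsto (fun s : ℕ => β * q ^ s) atTop atTop :=
    (tendsto_pow_atTop_atTop_of_one_lt hq).const_mul_atTop hβ
  refine tendsto_atTop_mono' _ ?_ hlin
  filter_upwards [hlin.eventually_ge_atTop 1, eventually_ge_atTop 7] with s h₁ hs
  calc β * q ^ s ≤ (β * q ^ s) ^ s := le_self_pow₀ h₁ (by omega)
    _ = β ^ s * q ^ (s * s) := by rw [mul_pow, ← pow_mul]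
    _ ≤ β ^ s * q ^ 2 ^ (s - 1) := by
      gcongr
      · exact hq.le
      · exact mul_self_le_two_pow_pred hs
    _ = β ^ s / r ^ 2 ^ (s - 1) := by rw [inv_pow, div_eq_mul_inv]

/-- The paper's `Y_m`, generated by the self-similarity of `K_β`. -/
noncomputable def cantorEndpoints (β : ℝ) : ℕ → Finset ℝ
  | 0 => {0, 1}
  | m + 1 => (cantorEndpoints β m).image (β * ·) ∪ (cantorEndpoints β m).image (1 - β + β * ·)

section cantorEndpoints

variable {β : ℝ}

theorem zero_mem_cantorEndpoints : ∀ m, (0 : ℝ) ∈ cantorEndpoints β m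
  | 0 => by simp [cantorEndpoints]
  | m + 1 => mem_union_left _ (mem_image.2 ⟨0, zero_mem_cantorEndpoints m, mul_zero β⟩)

theorem one_mem_cantorEndpoints : ∀ m, (1 : ℝ) ∈ cantorEndpoints β m
  | 0 => by simp [cantorEndpoints]
  | m + 1 => mem_union_right _ (mem_image.2 ⟨1, one_mem_cantorEndpoints m, by ring⟩)

theorem pow_mem_cantorEndpoints : ∀ m, β ^ m ∈ cantorEndpoints β m
  | 0 => by simp [cantorEndpoints]
  | m + 1 => mem_union_left _ (mem_image.2 ⟨_, pow_mem_cantorEndpoints m, (pow_succ' β m).symm⟩)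

theorem one_sub_mem_cantorEndpoints :
    ∀ {m : ℕ} {y : ℝ}, y ∈ cantorEndpoints β m → 1 - y ∈ cantorEndpoints β m
  | 0, y, hy => by
    simp only [cantorEndpoints, mem_insert, mem_singleton] at hy ⊢
    rcases hy with rfl | rfl <;> norm_num
  | m + 1, _, hy => by
    rcases mem_union.1 hy with hy | hy <;> obtain ⟨y, hy', rfl⟩ := mem_image.1 hy
    · exact mem_union_right _ (mem_image.2 ⟨1 - y, one_sub_mem_cantorEndpoints hy', by ring⟩)
    · exact mem_union_left _ (mem_image.2 ⟨1 - y, one_sub_mem_cantorEndpoints hy', by ring⟩)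

theorem cantorEndpoints_mono : Monotone (cantorEndpoints β) := by
  refine monotone_nat_of_le_succ fun m => ?_
  induction m with
  | zero =>
    intro y hy
    simp only [cantorEndpoints, mem_insert, mem_singleton] at hy
    rcases hy with rfl | rfl
    · exact zero_mem_cantorEndpoints 1
    · exact one_mem_cantorEndpoints 1
  | succ m ih => exact union_subset_union (image_subset_image ih) (image_subset_image ih)

theorem mem_cantorEndpoints_cases (hβ₀ : 0 ≤ β) (hβ : β ≤ 1 / 2) :
    ∀ {m : ℕ} {y : ℝ}, y ∈ cantorEndpoints β m →
      y = 0 ∨ y = 1 ∨ β ^ m ≤ y ∧ y ≤ 1 - β ^ m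
  | 0, y, hy => by
    simp only [cantorEndpoints, mem_insert, mem_singleton] at hy
    tauto
  | m + 1, _, hy => by
    have hp₀ : 0 ≤ β * β ^ m := by positivity
    have hpβ : β * β ^ m ≤ β := mul_le_of_le_one_right hβ₀ (pow_le_one₀ hβ₀ (by linarith))
    rw [pow_succ']
    rcases mem_union.1 hy with hy | hy <;> obtain ⟨y, hy', rfl⟩ := mem_image.1 hy <;>
      rcases mem_cantorEndpoints_cases hβ₀ hβ hy' with rfl | rfl | ⟨hl, hu⟩
    · left; ring
    · right; right; constructor <;> nlinarith
    · right; right; constructor <;> nlinarith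
    · right; right; constructor <;> nlinarith
    · right; left; ring
    · right; right; constructor <;> nlinarith

theorem mem_Icc_of_mem_cantorEndpoints (hβ₀ : 0 ≤ β) (hβ : β ≤ 1 / 2) {m : ℕ} {y : ℝ}
    (hy : y ∈ cantorEndpoints β m) : y ∈ Set.Icc 0 1 := by
  have := pow_nonneg hβ₀ m
  rcases mem_cantorEndpoints_cases hβ₀ hβ hy with rfl | rfl | ⟨hl, hu⟩
  · simp
  · simp
  · exact ⟨by linarith, by linarith⟩

theorem disjoint_image_cantorEndpoints (hβ₀ : 0 ≤ β) (hβ : β < 1 / 2) (m : ℕ) :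
    Disjoint ((cantorEndpoints β m).image (β * ·))
      ((cantorEndpoints β m).image (1 - β + β * ·)) := by
  refine disjoint_left.2 ?_
  rintro _ hl hr
  obtain ⟨y, hy, rfl⟩ := mem_image.1 hl
  obtain ⟨y', hy', hyy'⟩ := mem_image.1 hr
  have := (mem_Icc_of_mem_cantorEndpoints hβ₀ hβ.le hy).2
  have := (mem_Icc_of_mem_cantorEndpoints hβ₀ hβ.le hy').1
  nlinarith

theorem card_cantorEndpoints (hβ₀ : 0 < β) (hβ : β < 1 / 2) :
    ∀ m, #(cantorEndpoints β m) = 2 ^ (m + 1)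
  | 0 => by simp [cantorEndpoints]
  | m + 1 => by
    have hinj : Function.Injective (β * ·) := mul_right_injective₀ hβ₀.ne'
    rw [cantorEndpoints, card_union_of_disjoint (disjoint_image_cantorEndpoints hβ₀.le hβ m),
      card_image_of_injective _ hinj,
      card_image_of_injective (f := fun x => 1 - β + β * x) _
        ((add_right_injective (1 - β)).comp hinj),
      card_cantorEndpoints hβ₀ hβ m, pow_succ 2 (m + 1), mul_two]

theorem sq_mul_pow_le_prod_erase_one_sub_pow (hβ : 0 < β) (hβ' : β ≤ 1 / 3) {m : ℕ}
    (hm : m ≠ 0) :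
    β ^ 2 * β ^ m ≤
      ∏ y ∈ (cantorEndpoints β m).erase (1 - β ^ m), |β * β ^ m - y| / |1 - β ^ m - y| := by
  set p := β ^ m
  have hp₀ : 0 < p := pow_pos hβ m
  have hp : p ≤ 1 / 3 := (pow_le_of_le_one hβ.le (by linarith) hm).trans hβ'
  have hβp : β * p < p := by nlinarith
  set f : ℝ → ℝ := fun y => |β * p - y| / |1 - p - y|
  have hf₀ : ∀ y, 0 ≤ f y := fun y => div_nonneg (abs_nonneg _) (abs_nonneg _)
  set E := cantorEndpoints β m
  set T := (((E.erase (1 - p)).erase 0).erase p).erase 1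
  have h₀ : 0 ∈ E.erase (1 - p) :=
    mem_erase.2 ⟨by linarith, zero_mem_cantorEndpoints m⟩
  have hₚ : p ∈ (E.erase (1 - p)).erase 0 :=
    mem_erase.2 ⟨hp₀.ne', mem_erase.2 ⟨by linarith, pow_mem_cantorEndpoints m⟩⟩
  have h₁ : 1 ∈ ((E.erase (1 - p)).erase 0).erase p :=
    mem_erase.2 ⟨by linarith, mem_erase.2 ⟨one_ne_zero, mem_erase.2
      ⟨by linarith, one_mem_cantorEndpoints m⟩⟩⟩
  have hT : ∀ y ∈ T, p < y ∧ y < 1 - p := by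
    intro y hy
    simp only [T, mem_erase] at hy
    obtain ⟨hy₁, hyₚ, hy₀, hy_sub, hyE⟩ := hy
    rcases mem_cantorEndpoints_cases hβ.le (by linarith) hyE with rfl | rfl | ⟨hl, hu⟩
    · exact absurd rfl hy₀
    · exact absurd rfl hy₁
    · exact ⟨hl.lt_of_ne' hyₚ, hu.lt_of_ne hy_sub⟩
  have hT_one_sub : ∀ y ∈ T, 1 - y ∈ T := by
    intro y hy
    simp only [T, mem_erase] at hy ⊢
    obtain ⟨hy₁, hyₚ, hy₀, hy_sub, hyE⟩ := hy
    refine ⟨fun h => hy₀ (by linarith), fun h => hy_sub (by linarith),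
      fun h => hy₁ (by linarith), fun h => hyₚ (by linarith), one_sub_mem_cantorEndpoints hyE⟩
  have hpair : ∀ y ∈ T, 1 ≤ f y * f (1 - y) := by
    intro y hy
    obtain ⟨hl, hu⟩ := hT y hy
    have hsplit : f y * f (1 - y) =
        (y - β * p) / (y - p) * ((1 - y - β * p) / (1 - y - p)) := by
      simp only [f]
      rw [abs_sub_comm (β * p) y, abs_of_pos (by linarith : 0 < y - β * p),
        abs_of_pos (by linarith : 0 < 1 - p - y), abs_sub_comm (β * p),
        abs_of_pos (by linarith : 0 < 1 - y - β * p),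
        abs_of_pos (by linarith : 0 < 1 - p - (1 - y))]
      ring
    rw [hsplit]
    exact one_le_mul_of_one_le_of_one_le ((one_le_div (by linarith)).2 (by linarith))
      ((one_le_div (by linarith)).2 (by linarith))
  have hT_prod : 1 ≤ ∏ y ∈ T, f y :=
    one_le_prod_of_involution (1 - ·) hT_one_sub (fun y _ => sub_sub_cancel 1 y)
      (fun y _ => hf₀ y) hpair
  have f₀ : f 0 = β * p / (1 - p) := by
    simp only [f, sub_zero]
    rw [abs_of_pos (by positivity), abs_of_pos (by linarith)]
  have fₚ : f p = (1 - β) * p / (1 - 2 * p) := by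
    simp only [f]
    rw [abs_of_neg (by linarith), abs_of_pos (by linarith)]
    ring
  have f₁ : f 1 = (1 - β * p) / p := by
    simp only [f]
    rw [abs_of_neg (by linarith), abs_of_neg (by linarith)]
    ring
  have hvals : β ^ 2 * p ≤ f 0 * (f p * f 1) := by
    have hden : 0 < (1 - p) * ((1 - 2 * p) * p) :=
      mul_pos (by linarith) (mul_pos (by linarith) hp₀)
    have key : β * ((1 - p) * (1 - 2 * p)) ≤ (1 - β) * (1 - β * p) := by
      have h₁ : (1 - p) * (1 - 2 * p) ≤ 1 := by nlinarith
      nlinarith [mul_le_mul_of_nonneg_left h₁ hβ.le,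
        mul_nonneg (by linarith : (0 : ℝ) ≤ 1 - β - 2 / 3)
          (by nlinarith : (0 : ℝ) ≤ 1 - β * p - 8 / 9)]
    rw [f₀, fₚ, f₁, div_mul_div_comm, div_mul_div_comm, le_div_iff₀ hden]
    nlinarith [mul_le_mul_of_nonneg_left key (by positivity : 0 ≤ β * p * p)]
  calc β ^ 2 * p ≤ f 0 * (f p * f 1) := hvals
    _ ≤ f 0 * (f p * (f 1 * ∏ y ∈ T, f y)) :=
      mul_le_mul_of_nonneg_left (mul_le_mul_of_nonneg_left
        (le_mul_of_one_le_right (hf₀ 1) hT_prod) (hf₀ p)) (hf₀ 0)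
    _ = ∏ y ∈ E.erase (1 - p), f y := by
      rw [mul_prod_erase _ _ h₁, mul_prod_erase _ _ hₚ, mul_prod_erase _ _ h₀]

theorem pow_div_le_prod_erase_cantorEndpoints_succ (hβ : 0 < β) (hβ' : β ≤ 1 / 3) {m : ℕ}
    (hm : m ≠ 0) :
    β ^ (m + 2) / (1 - β ^ 2) ^ 2 ^ (m + 1) ≤
      ∏ y ∈ (cantorEndpoints β (m + 1)).erase (β * (1 - β ^ m)),
        |β * (β * β ^ m) - y| / |β * (1 - β ^ m) - y| := by
  set E := cantorEndpoints β m
  have hp₀ : 0 < β ^ m := pow_pos hβ m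
  have hpβ : β ^ m ≤ β := pow_le_of_le_one hβ.le (by linarith) hm
  have hq : 0 < 1 - β ^ 2 := by nlinarith
  have hz : β * (1 - β ^ m) ∉ E.image (1 - β + β * ·) := by
    simp only [mem_image, not_exists, not_and]
    intro y hy h
    have := (mem_Icc_of_mem_cantorEndpoints hβ.le (by linarith) hy).1
    nlinarith
  have hright : ∀ y ∈ E, (1 - β ^ 2)⁻¹ ≤
      |β * (β * β ^ m) - (1 - β + β * y)| / |β * (1 - β ^ m) - (1 - β + β * y)| := by
    intro y hy
    obtain ⟨hy₀, hy₁⟩ := mem_Icc_of_mem_cantorEndpoints hβ.le (by linarith) hy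
    have hβy : 0 ≤ β * y := mul_nonneg hβ.le hy₀
    rw [abs_sub_comm, abs_of_pos (by nlinarith), abs_sub_comm, abs_of_pos (by nlinarith),
      inv_eq_one_div, div_le_div_iff₀ hq (by nlinarith)]
    have h : 0 ≤ 1 - β + β ^ 2 * (1 - y) + β ^ 3 * β ^ m - β ^ m * (1 + β) := by
      nlinarith [mul_nonneg (sq_nonneg β) (sub_nonneg.2 hy₁), pow_pos hβ 3, mul_pos hβ hp₀]
    nlinarith [mul_nonneg hβ.le h]
  rw [cantorEndpoints, erase_union_distrib, erase_eq_of_notMem hz,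
    prod_union (disjoint_of_subset_left (erase_subset _ _)
      (disjoint_image_cantorEndpoints hβ.le (by linarith) m)),
    prod_erase_image_mul_abs_div hβ.ne',
    prod_image fun _ _ _ _ h => mul_left_cancel₀ hβ.ne' (add_left_cancel h)]
  calc β ^ (m + 2) / (1 - β ^ 2) ^ 2 ^ (m + 1)
        = (β ^ 2 * β ^ m) * ∏ _y ∈ E, (1 - β ^ 2)⁻¹ := by
        rw [prod_const, card_cantorEndpoints hβ (by linarith), inv_pow, div_eq_mul_inv]
        ring
    _ ≤ _ := mul_le_mul (sq_mul_pow_le_prod_erase_one_sub_pow hβ hβ' hm)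
        (prod_le_prod (fun _ _ => by positivity) hright) (prod_nonneg fun _ _ => by positivity)
        (prod_nonneg fun _ _ => by positivity)

end cantorEndpoints

/-- `L k j` is the left endpoint of the `j`-th basic interval of level `k` of `K_β`. -/
structure IsCantorLeftEndpoints (β : ℝ) (L : ℕ → ℕ → ℝ) : Prop where
  zero : L 0 0 = 0
  left : ∀ k j, L (k + 1) (2 * j) = L k j
  right : ∀ k j, L (k + 1) (2 * j + 1) = L k j + β ^ k - β ^ (k + 1)

namespace IsCantorLeftEndpoints

variable {β : ℝ} {L : ℕ → ℕ → ℝ}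

theorem apply_zero (hL : IsCantorLeftEndpoints β L) : ∀ k, L k 0 = 0
  | 0 => hL.zero
  | k + 1 => (hL.left k 0).trans (hL.apply_zero k)

theorem succ_of_lt (hL : IsCantorLeftEndpoints β L) :
    ∀ {m j : ℕ}, j < 2 ^ m → L (m + 1) j = β * L m j
  | 0, j, hj => by
    obtain rfl : j = 0 := by simpa using hj
    rw [hL.apply_zero, hL.apply_zero, mul_zero]
  | m + 1, j, hj => by
    obtain ⟨i, rfl | rfl⟩ := Nat.even_or_odd' j
    · rw [hL.left, hL.left, hL.succ_of_lt (by omega)]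
    · rw [hL.right, hL.right, hL.succ_of_lt (by omega)]
      ring

theorem succ_two_pow_add (hL : IsCantorLeftEndpoints β L) :
    ∀ {m j : ℕ}, j < 2 ^ m → L (m + 1) (2 ^ m + j) = 1 - β + β * L m j
  | 0, j, hj => by
    obtain rfl : j = 0 := by simpa using hj
    have := hL.right 0 0
    simp only [mul_zero, zero_add, pow_zero, pow_one] at this
    rw [pow_zero, add_zero, this, hL.zero]
    ring
  | m + 1, j, hj => by
    obtain ⟨i, rfl | rfl⟩ := Nat.even_or_odd' j
    · rw [pow_succ', ← mul_add, hL.left, hL.left, hL.succ_two_pow_add (by omega)]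
    · rw [pow_succ', ← add_assoc, ← mul_add, hL.right, hL.right,
        hL.succ_two_pow_add (by omega)]
      ring

theorem image_add_succ (hL : IsCantorLeftEndpoints β L) (m : ℕ) (c : ℝ) :
    (range (2 ^ (m + 1))).image (fun j => L (m + 1) j + β * c) =
      ((range (2 ^ m)).image (fun j => L m j + c)).image (β * ·) ∪
        ((range (2 ^ m)).image (fun j => L m j + c)).image (1 - β + β * ·) := by
  rw [image_range_two_pow_succ, image_image, image_image]
  congr 1 <;> refine image_congr fun j hj => ?_ <;> have hj := mem_range.1 hj
  · simp only [Function.comp, hL.succ_of_lt hj]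
    ring
  · simp only [Function.comp, hL.succ_two_pow_add hj]
    ring

theorem image_union_image_eq (hL : IsCantorLeftEndpoints β L) :
    ∀ m, (range (2 ^ m)).image (L m) ∪ (range (2 ^ m)).image (fun j => L m j + β ^ m) =
      cantorEndpoints β m
  | 0 => by simp [hL.zero, cantorEndpoints]
  | m + 1 => by
    have h₀ := hL.image_add_succ m 0
    simp only [mul_zero, add_zero] at h₀
    rw [h₀, pow_succ', hL.image_add_succ, cantorEndpoints, ← hL.image_union_image_eq m,
      image_union, image_union, union_union_union_comm]

theorem iInter_subset_Icc (hL : IsCantorLeftEndpoints β L) :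
    (⋂ k : ℕ, ⋃ j ∈ range (2 ^ k), Set.Icc (L k j) (L k j + β ^ k)) ⊆ Set.Icc 0 1 := by
  intro x hx
  simpa [hL.zero] using Set.mem_iInter.1 hx 0

theorem pow_mem_iInter (hL : IsCantorLeftEndpoints β L) (hβ₀ : 0 ≤ β) (hβ₁ : β ≤ 1) (n : ℕ) :
    β ^ n ∈ ⋂ k : ℕ, ⋃ j ∈ range (2 ^ k), Set.Icc (L k j) (L k j + β ^ k) := by
  refine Set.mem_iInter.2 fun k => Set.mem_iUnion₂.2 ?_
  rcases le_or_gt n k with hnk | hkn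
  · have h := cantorEndpoints_mono (β := β) hnk (pow_mem_cantorEndpoints n)
    rw [← hL.image_union_image_eq, mem_union, mem_image, mem_image] at h
    have hk := pow_nonneg hβ₀ k
    rcases h with ⟨j, hj, hjn⟩ | ⟨j, hj, hjn⟩ <;> refine ⟨j, hj, ?_⟩ <;> rw [← hjn]
    · exact Set.left_mem_Icc.2 (by linarith)
    · exact Set.right_mem_Icc.2 (by linarith)
  · refine ⟨0, mem_range.2 (Nat.two_pow_pos k), ?_⟩
    rw [hL.apply_zero, zero_add]
    exact ⟨pow_nonneg hβ₀ n, pow_le_pow_of_le_one hβ₀ hβ₁ hkn.le⟩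

end IsCantorLeftEndpoints

/-- For `K_β` with `0 < β ≤ 1/3`, the Lebesgue constants at the endpoint nodes
`Y_{s-1}` satisfy `Λ_{2^s} ≥ β^s/(1-β²)^{2^{s-1}}` (for `s ≥ 3`) and tend to `∞`. -/
theorem stmt_8 (β : ℝ) (hβ : 0 < β) (hβ' : β ≤ 1/3)
    (L : ℕ → ℕ → ℝ) (hL0 : L 0 0 = 0)
    (hLleft : ∀ k j, L (k + 1) (2 * j) = L k j)
    (hLright : ∀ k j, L (k + 1) (2 * j + 1) = L k j + β ^ k - β ^ (k + 1))
    (K : Set ℝ)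
    (hK : K = ⋂ k : ℕ, ⋃ j ∈ Finset.range (2 ^ k), Set.Icc (L k j) (L k j + β ^ k))
    (Y : ℕ → Finset ℝ)
    (hY : ∀ s : ℕ, Y s = (Finset.range (2 ^ s)).image (L s) ∪
      (Finset.range (2 ^ s)).image (fun j => L s j + β ^ s))
    (Λ : ℕ → ℝ)
    (hΛ : ∀ s : ℕ, Λ s = sSup {t : ℝ | ∃ x ∈ K,
      t = ∑ z ∈ Y (s - 1), |∏ y ∈ (Y (s - 1)).erase z, ((x - y) / (z - y))|}) :
    (∀ s : ℕ, 3 ≤ s → β ^ s / (1 - β ^ 2) ^ 2 ^ (s - 1) ≤ Λ s) ∧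
      Filter.Tendsto Λ Filter.atTop Filter.atTop := by
  have hL : IsCantorLeftEndpoints β L := ⟨hL0, hLleft, hLright⟩
  have hYE : ∀ m, Y m = cantorEndpoints β m := fun m => (hY m).trans (hL.image_union_image_eq m)
  have hK_bdd : Bornology.IsBounded K :=
    (Metric.isBounded_Icc (0 : ℝ) 1).subset (hK ▸ hL.iInter_subset_Icc)
  have hbound : ∀ s, 3 ≤ s → β ^ s / (1 - β ^ 2) ^ 2 ^ (s - 1) ≤ Λ s := by
    intro s hs
    obtain ⟨m, rfl⟩ : ∃ m, s = m + 2 := ⟨s - 2, by omega⟩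
    have hx : β * (β * β ^ m) ∈ K := by
      rw [hK, ← pow_succ', ← pow_succ']
      exact hL.pow_mem_iInter hβ.le (by linarith) (m + 2)
    have hz : β * (1 - β ^ m) ∈ Y (m + 1) := by
      rw [hYE]
      exact mem_union_left _
        (mem_image_of_mem _ (one_sub_mem_cantorEndpoints (pow_mem_cantorEndpoints m)))
    rw [hΛ, show m + 2 - 1 = m + 1 from rfl]
    refine (pow_div_le_prod_erase_cantorEndpoints_succ hβ hβ' (by omega)).trans ?_
    rw [← hYE]
    exact prod_abs_div_le_sSup hK_bdd hx hz
  exact ⟨hbound, tendsto_atTop_mono' _ (eventually_atTop.2 ⟨3, hbound⟩)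
    (tendsto_pow_div_pow_two_pow hβ (by nlinarith) (by nlinarith))⟩
end
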